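/- arXiv:1703.00397 — 3 statements merged into one kernel-verified Lean document; each statement's English description precedes it below -/
import Mathlib

section
/- Suppose B' is a k×q binary matrix whose columns are pairwise orthogonal and each column contains exactly three 1's, where k = 3q (i.e., the columns encode an exact 3-cover). Let η > 0 and let B = [B' | η·I_k]. Then the eigenvalues of B Bᵀ are η²+3 with multiplicity q and η² with multiplicity k−q, and hence tr((B Bᵀ)⁻¹) = q/(η²+3) + (k−q)/η². -/
open Matrix Polynomial

theorem stmt_4 (q : ℕ) (k : ℕ) (hk : k = 3 * q) (η : ℝ) (hη : 0 < η)
    (B' : Matrix (Fin k) (Fin q) ℝ)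
    (hbin : ∀ i j, B' i j = 0 ∨ B' i j = 1)
    (hgram : B'ᵀ * B' = (3 : ℝ) • (1 : Matrix (Fin q) (Fin q) ℝ))
    (B : Matrix (Fin k) (Fin q ⊕ Fin k) ℝ)
    (hB : B = Matrix.fromCols B' (η • (1 : Matrix (Fin k) (Fin k) ℝ))) :
    (B * Bᵀ).charpoly.roots =
      Multiset.replicate q (η ^ 2 + 3) + Multiset.replicate (k - q) (η ^ 2) ∧
    Matrix.trace (B * Bᵀ)⁻¹ = q / (η ^ 2 + 3) + (k - q : ℝ) / η ^ 2 := by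
  have hη2 : (η : ℝ) ^ 2 ≠ 0 := pow_ne_zero 2 hη.ne'
  have hη3 : (η : ℝ) ^ 2 + 3 ≠ 0 := by positivity
  have hqk : q ≤ k := by omega
  set P : Matrix (Fin k) (Fin k) ℝ := B' * B'ᵀ with hP
  have hM : B * Bᵀ = P + (η ^ 2) • 1 := by
    subst hB
    rw [transpose_fromCols, fromCols_mul_fromRows, transpose_smul, transpose_one]
    congr 1
    rw [Matrix.smul_mul, Matrix.mul_smul, Matrix.one_mul, smul_smul, sq]
  have hPP : P * P = (3 : ℝ) • P := by
    calc P * P = B' * (B'ᵀ * B') * B'ᵀ := by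
          simp only [hP, Matrix.mul_assoc]
      _ = (3 : ℝ) • P := by
          rw [hgram, Matrix.mul_smul, Matrix.mul_one, hP, Matrix.smul_mul]
  have htrP : Matrix.trace P = 3 * q := by
    rw [hP, Matrix.trace_mul_comm, hgram, Matrix.trace_smul, Matrix.trace_one]
    simp
  -- determinant computation
  have hdet : ∀ t : ℝ, t ≠ η ^ 2 →
      (t • (1 : Matrix (Fin k) (Fin k) ℝ) - (P + η ^ 2 • 1)).det
        = (t - (η ^ 2 + 3)) ^ q * (t - η ^ 2) ^ (k - q) := by
    intro t ht
    set c : ℝ := t - η ^ 2 with hc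
    have hc0 : c ≠ 0 := sub_ne_zero.mpr ht
    have h1 : t • (1 : Matrix (Fin k) (Fin k) ℝ) - (P + η ^ 2 • 1) = c • 1 - P := by
      rw [hc, sub_smul]; abel
    have h2 : c • (1 : Matrix (Fin k) (Fin k) ℝ) - P = c • (1 - B' * (c⁻¹ • B'ᵀ)) := by
      rw [smul_sub, Matrix.mul_smul, smul_smul, mul_inv_cancel₀ hc0, one_smul]
    have h3 : (1 : Matrix (Fin q) (Fin q) ℝ) - (c⁻¹ • B'ᵀ) * B'
        = (1 - 3 * c⁻¹) • (1 : Matrix (Fin q) (Fin q) ℝ) := by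
      rw [Matrix.smul_mul, hgram, smul_smul, sub_smul, one_smul, mul_comm]
    rw [h1, h2, det_smul, det_one_sub_mul_comm, h3, det_smul, det_one, mul_one]
    simp only [Fintype.card_fin]
    have hck : c ^ k = c ^ (k - q) * c ^ q := by
      rw [← pow_add]; congr 1; omega
    have hfac : c * (1 - 3 * c⁻¹) = t - (η ^ 2 + 3) := by
      field_simp [hc]; ring
    calc c ^ k * (1 - 3 * c⁻¹) ^ q
        = (c * (1 - 3 * c⁻¹)) ^ q * c ^ (k - q) := by rw [hck, mul_pow]; ring
      _ = (t - (η ^ 2 + 3)) ^ q * (t - η ^ 2) ^ (k - q) := by rw [hfac, hc]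
  -- characteristic polynomial
  have hchar : (P + η ^ 2 • 1).charpoly
      = (X - C (η ^ 2 + 3)) ^ q * (X - C (η ^ 2)) ^ (k - q) := by
    apply Polynomial.eq_of_infinite_eval_eq
    apply Set.Infinite.mono _ ((Set.finite_singleton (η ^ 2)).infinite_compl)
    intro t ht
    simp only [Set.mem_compl_iff, Set.mem_singleton_iff] at ht
    show Polynomial.eval t _ = Polynomial.eval t _
    have hmap : (charmatrix (P + η ^ 2 • 1)).map (Polynomial.evalRingHom t)
        = t • (1 : Matrix (Fin k) (Fin k) ℝ) - (P + η ^ 2 • 1) := by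
      ext i j
      by_cases h : i = j
      · subst h
        simp [charmatrix_apply_eq, Matrix.sub_apply, Matrix.smul_apply, Matrix.one_apply_eq]
      · simp [charmatrix_apply_ne _ _ _ h, Matrix.sub_apply, Matrix.smul_apply,
          Matrix.one_apply_ne h]
    have hdet' := (Polynomial.evalRingHom t).map_det (charmatrix (P + η ^ 2 • 1))
    rw [Matrix.charpoly]
    rw [show Polynomial.eval t (charmatrix (P + η ^ 2 • 1)).det
        = (Polynomial.evalRingHom t) (charmatrix (P + η ^ 2 • 1)).det from rfl, hdet',
      RingHom.mapMatrix_apply, hmap, hdet t ht]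
    simp [eval_mul, eval_pow, eval_sub, eval_X, eval_C]
  constructor
  · rw [hM, hchar]
    have hne1 : ((X : ℝ[X]) - C (η ^ 2 + 3)) ^ q ≠ 0 :=
      pow_ne_zero _ (X_sub_C_ne_zero _)
    have hne2 : ((X : ℝ[X]) - C (η ^ 2)) ^ (k - q) ≠ 0 :=
      pow_ne_zero _ (X_sub_C_ne_zero _)
    rw [roots_mul (mul_ne_zero hne1 hne2), roots_pow, roots_pow, roots_X_sub_C, roots_X_sub_C,
      Multiset.nsmul_singleton, Multiset.nsmul_singleton]
  · -- the inverse
    set b : ℝ := -(η ^ 2 * (η ^ 2 + 3))⁻¹ with hb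
    set N : Matrix (Fin k) (Fin k) ℝ := (η ^ 2)⁻¹ • 1 + b • P with hN
    have hmul : (P + η ^ 2 • 1) * N = 1 := by
      have expand : (P + η ^ 2 • 1) * N
          = (η ^ 2)⁻¹ • P + b • (P * P) + ((η ^ 2) * (η ^ 2)⁻¹) • (1 : Matrix (Fin k) (Fin k) ℝ)
            + (η ^ 2 * b) • P := by
        simp only [hN, Matrix.add_mul, Matrix.mul_add, Matrix.mul_smul, Matrix.smul_mul,
          Matrix.mul_one, Matrix.one_mul, smul_smul]
        module
      rw [expand, hPP, smul_smul, mul_inv_cancel₀ hη2, one_smul]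
      have h0 : (η ^ 2)⁻¹ + (b * 3 + η ^ 2 * b) = 0 := by
        rw [hb]; field_simp; ring
      calc (η ^ 2)⁻¹ • P + (b * 3) • P + (1 : Matrix (Fin k) (Fin k) ℝ) + (η ^ 2 * b) • P
          = ((η ^ 2)⁻¹ + (b * 3 + η ^ 2 * b)) • P + 1 := by
            rw [add_smul, add_smul]; abel
        _ = 1 := by rw [h0, zero_smul, zero_add]
    have hinv : (B * Bᵀ)⁻¹ = N := by
      rw [hM]; exact Matrix.inv_eq_right_inv hmul
    rw [hinv, hN, Matrix.trace_add, Matrix.trace_smul, Matrix.trace_smul, Matrix.trace_one,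
      htrP]
    simp only [Fintype.card_fin, smul_eq_mul, hb]
    field_simp
    ring
end

section
/- Let f(M) = tr((M Mᵀ)⁻¹) for real matrices M with M Mᵀ invertible, where M is viewed as a set of column vectors. Then f, regarded as a set function on finite sets of column vectors (with the union interpreted as concatenation of columns), is not supermodular: there exist finite sets of vectors A ⊆ B in ℝ^5 and a vector x ∉ B such that f(A ∪ {x}) − f(A) < f(B ∪ {x}) − f(B). -/
open Matrix

/-- `gram S` is `V_S V_Sᵀ = ∑_{v ∈ S} v vᵀ` for a finite set `S` of column vectors. -/
noncomputable def gram (S : Finset (Fin 5 → ℝ)) : Matrix (Fin 5) (Fin 5) ℝ :=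
  ∑ v ∈ S, Matrix.vecMulVec v v

noncomputable def va : Fin 5 → ℝ := ![0,0,1,0,1]
noncomputable def vb : Fin 5 → ℝ := ![1,0,0,1,1]
noncomputable def vc : Fin 5 → ℝ := ![1,1,1,0,0]
noncomputable def vd : Fin 5 → ℝ := ![1,1,0,1,0]
noncomputable def ve : Fin 5 → ℝ := ![1,1,0,0,1]
noncomputable def vf : Fin 5 → ℝ := ![0,0,0,1,1]
noncomputable def vx : Fin 5 → ℝ := ![0,1,0,1,1]

noncomputable def gA : Matrix (Fin 5) (Fin 5) ℝ :=
  !![4, 3, 1, 2, 2;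
     3, 3, 1, 1, 1;
     1, 1, 2, 0, 1;
     2, 1, 0, 2, 1;
     2, 1, 1, 1, 3]

noncomputable def gAi : Matrix (Fin 5) (Fin 5) ℝ :=
  !![4, -3, 0, -2, -1;
     -3, 11/4, -1/4, 5/4, 3/4;
     0, -1/4, 3/4, 1/4, -1/4;
     -2, 5/4, 1/4, 7/4, 1/4;
     -1, 3/4, -1/4, 1/4, 3/4]

noncomputable def gB : Matrix (Fin 5) (Fin 5) ℝ :=
  !![4, 3, 1, 2, 2;
     3, 3, 1, 1, 1;
     1, 1, 2, 0, 1;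
     2, 1, 0, 3, 2;
     2, 1, 1, 2, 4]

noncomputable def gBi : Matrix (Fin 5) (Fin 5) ℝ :=
  !![7/4, -3/2, 0, -1/2, -1/4;
     -3/2, 7/4, -1/4, 1/4, 1/4;
     0, -1/4, 3/4, 1/4, -1/4;
     -1/2, 1/4, 1/4, 3/4, -1/4;
     -1/4, 1/4, -1/4, -1/4, 1/2]

noncomputable def gAx : Matrix (Fin 5) (Fin 5) ℝ :=
  !![4, 3, 1, 2, 2;
     3, 4, 1, 2, 2;
     1, 1, 2, 0, 1;
     2, 2, 0, 3, 2;
     2, 2, 1, 2, 4]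

noncomputable def gAxi : Matrix (Fin 5) (Fin 5) ℝ :=
  !![28/43, -15/43, -6/43, -8/43, -1/43;
     -15/43, 28/43, -6/43, -8/43, -1/43;
     -6/43, -6/43, 32/43, 14/43, -9/43;
     -8/43, -8/43, 14/43, 33/43, -12/43;
     -1/43, -1/43, -9/43, -12/43, 20/43]

noncomputable def gBx : Matrix (Fin 5) (Fin 5) ℝ :=
  !![4, 3, 1, 2, 2;
     3, 4, 1, 2, 2;
     1, 1, 2, 0, 1;
     2, 2, 0, 4, 3;
     2, 2, 1, 3, 5]

noncomputable def gBxi : Matrix (Fin 5) (Fin 5) ℝ :=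
  !![5/8, -3/8, -1/8, -1/8, 0;
     -3/8, 5/8, -1/8, -1/8, 0;
     -1/8, -1/8, 53/72, 7/24, -2/9;
     -1/8, -1/8, 7/24, 5/8, -1/3;
     0, 0, -2/9, -1/3, 4/9]


lemma gram_pair (s t u w z : Fin 5 → ℝ)
    (h1 : s ∉ ({t, u, w, z} : Finset (Fin 5 → ℝ)))
    (h2 : t ∉ ({u, w, z} : Finset (Fin 5 → ℝ)))
    (h3 : u ∉ ({w, z} : Finset (Fin 5 → ℝ)))
    (h4 : w ∉ ({z} : Finset (Fin 5 → ℝ))) :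
    gram {s, t, u, w, z} =
      vecMulVec s s + vecMulVec t t + vecMulVec u u + vecMulVec w w + vecMulVec z z := by
  rw [_root_.gram, Finset.sum_insert h1, Finset.sum_insert h2, Finset.sum_insert h3,
    Finset.sum_insert h4, Finset.sum_singleton]
  abel

lemma gram_insert (s : Fin 5 → ℝ) (S : Finset (Fin 5 → ℝ)) (h : s ∉ S) :
    gram (insert s S) = vecMulVec s s + gram S := by
  rw [_root_.gram, Finset.sum_insert h, _root_.gram]

set_option maxHeartbeats 2000000 in
theorem stmt_6 :
    ∃ (A B : Finset (Fin 5 → ℝ)) (x : Fin 5 → ℝ),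
      A ⊆ B ∧ x ∉ B ∧
      IsUnit (gram A) ∧ IsUnit (gram B) ∧
      IsUnit (gram (insert x A)) ∧ IsUnit (gram (insert x B)) ∧
      Matrix.trace (gram (insert x A))⁻¹ - Matrix.trace (gram A)⁻¹ <
        Matrix.trace (gram (insert x B))⁻¹ - Matrix.trace (gram B)⁻¹ := by
  have hab : va ∉ ({vb, vc, vd, ve} : Finset (Fin 5 → ℝ)) := by
    norm_num [va, vb, vc, vd, ve, funext_iff, Fin.forall_fin_succ]
  have hbc : vb ∉ ({vc, vd, ve} : Finset (Fin 5 → ℝ)) := by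
    norm_num [vb, vc, vd, ve, funext_iff, Fin.forall_fin_succ]
  have hcd : vc ∉ ({vd, ve} : Finset (Fin 5 → ℝ)) := by
    norm_num [vc, vd, ve, funext_iff, Fin.forall_fin_succ]
  have hde : vd ∉ ({ve} : Finset (Fin 5 → ℝ)) := by
    norm_num [vd, ve, funext_iff, Fin.forall_fin_succ]
  have hfA : vf ∉ ({va, vb, vc, vd, ve} : Finset (Fin 5 → ℝ)) := by
    norm_num [va, vb, vc, vd, ve, vf, funext_iff, Fin.forall_fin_succ]
  have hxA : vx ∉ ({va, vb, vc, vd, ve} : Finset (Fin 5 → ℝ)) := by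
    norm_num [va, vb, vc, vd, ve, vx, funext_iff, Fin.forall_fin_succ]
  have hxB : vx ∉ ({vf, va, vb, vc, vd, ve} : Finset (Fin 5 → ℝ)) := by
    norm_num [va, vb, vc, vd, ve, vf, vx, funext_iff, Fin.forall_fin_succ]
  have hgA : gram {va, vb, vc, vd, ve} = gA := by
    rw [gram_pair va vb vc vd ve hab hbc hcd hde]
    ext i j
    fin_cases i <;> fin_cases j <;>
      norm_num [va, vb, vc, vd, ve, gA, vecMulVec, Matrix.vecHead, Matrix.vecTail] <;> simp <;> norm_num
  have hgB : gram {vf, va, vb, vc, vd, ve} = gB := by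
    rw [show ({vf, va, vb, vc, vd, ve} : Finset (Fin 5 → ℝ)) =
        insert vf {va, vb, vc, vd, ve} from rfl,
      gram_insert vf _ hfA, gram_pair va vb vc vd ve hab hbc hcd hde]
    ext i j
    fin_cases i <;> fin_cases j <;>
      norm_num [va, vb, vc, vd, ve, vf, gB, vecMulVec, Matrix.vecHead, Matrix.vecTail] <;> simp <;> norm_num
  have hgAx : gram (insert vx {va, vb, vc, vd, ve}) = gAx := by
    rw [gram_insert vx _ hxA, gram_pair va vb vc vd ve hab hbc hcd hde]
    ext i j
    fin_cases i <;> fin_cases j <;>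
      norm_num [va, vb, vc, vd, ve, vx, gAx, vecMulVec, Matrix.vecHead, Matrix.vecTail] <;> simp <;> norm_num
  have hgBx : gram (insert vx {vf, va, vb, vc, vd, ve}) = gBx := by
    rw [gram_insert vx _ hxB,
      show ({vf, va, vb, vc, vd, ve} : Finset (Fin 5 → ℝ)) =
        insert vf {va, vb, vc, vd, ve} from rfl,
      gram_insert vf _ hfA, gram_pair va vb vc vd ve hab hbc hcd hde]
    ext i j
    fin_cases i <;> fin_cases j <;>
      norm_num [va, vb, vc, vd, ve, vf, vx, gBx, vecMulVec, Matrix.vecHead, Matrix.vecTail] <;> simp <;> norm_num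
  have mA : gA * gAi = 1 := by
    ext i j
    fin_cases i <;> fin_cases j <;>
      norm_num [gA, gAi, Matrix.mul_apply, Fin.sum_univ_five, Matrix.one_apply, Fin.ext_iff, Matrix.vecHead, Matrix.vecTail] <;> simp <;> norm_num
  have mB : gB * gBi = 1 := by
    ext i j
    fin_cases i <;> fin_cases j <;>
      norm_num [gB, gBi, Matrix.mul_apply, Fin.sum_univ_five, Matrix.one_apply, Fin.ext_iff, Matrix.vecHead, Matrix.vecTail] <;> simp <;> norm_num
  have mAx : gAx * gAxi = 1 := by
    ext i j
    fin_cases i <;> fin_cases j <;>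
      norm_num [gAx, gAxi, Matrix.mul_apply, Fin.sum_univ_five, Matrix.one_apply, Fin.ext_iff, Matrix.vecHead, Matrix.vecTail] <;> simp <;> norm_num
  have mBx : gBx * gBxi = 1 := by
    ext i j
    fin_cases i <;> fin_cases j <;>
      norm_num [gBx, gBxi, Matrix.mul_apply, Fin.sum_univ_five, Matrix.one_apply, Fin.ext_iff, Matrix.vecHead, Matrix.vecTail] <;> simp <;> norm_num
  refine ⟨{va, vb, vc, vd, ve}, {vf, va, vb, vc, vd, ve}, vx, ?_, hxB, ?_, ?_, ?_, ?_, ?_⟩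
  · intro t ht; simp only [Finset.mem_insert, Finset.mem_singleton] at ht ⊢; tauto
  · rw [hgA]
    exact (Matrix.isUnit_iff_isUnit_det gA).mpr (Matrix.isUnit_det_of_right_inverse mA)
  · rw [hgB]
    exact (Matrix.isUnit_iff_isUnit_det gB).mpr (Matrix.isUnit_det_of_right_inverse mB)
  · rw [hgAx]
    exact (Matrix.isUnit_iff_isUnit_det gAx).mpr (Matrix.isUnit_det_of_right_inverse mAx)
  · rw [hgBx]
    exact (Matrix.isUnit_iff_isUnit_det gBx).mpr (Matrix.isUnit_det_of_right_inverse mBx)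
  · rw [hgAx, hgA, hgBx, hgB, Matrix.inv_eq_right_inv mA, Matrix.inv_eq_right_inv mB,
      Matrix.inv_eq_right_inv mAx, Matrix.inv_eq_right_inv mBx]
    norm_num [gAi, gBi, gAxi, gBxi, Matrix.trace, Fin.sum_univ_five, Matrix.diag] <;> simp <;> norm_num
end

section
/- Let B' be a k×q binary matrix where k = 3q, each column has exactly three 1's, the columns are linearly independent, and B' does NOT encode an exact 3-cover (i.e., some row of B' contains more than one 1, equivalently some row is all zeros). Then the q nonzero eigenvalues of B' B'ᵀ are not all equal: at least two of them are distinct. -/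
open Matrix Polynomial

private lemma eval_charpoly_aux {n : Type*} [Fintype n] [DecidableEq n]
    (A : Matrix n n ℝ) (x : ℝ) :
    A.charpoly.eval x = (Matrix.diagonal (fun _ => x) - A).det := by
  show (Polynomial.evalRingHom x) A.charpoly = _
  rw [Matrix.charpoly, RingHom.map_det]
  congr 1
  ext i j
  by_cases h : i = j <;>
    simp [Matrix.charmatrix_apply, Matrix.diagonal_apply, h]

theorem stmt_14 (q : ℕ) (k : ℕ) (hk : k = 3 * q)
    (B' : Matrix (Fin k) (Fin q) ℝ)
    (hbin : ∀ i j, B' i j = 0 ∨ B' i j = 1)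
    (hcol : ∀ j, ∑ i, B' i j = 3)
    (hli : LinearIndependent ℝ (fun j => fun i => B' i j))
    (hnotcover : ¬ ∀ i, ∑ j, B' i j = 1) :
    ∃ μ₁ ∈ (B' * B'ᵀ).charpoly.roots, ∃ μ₂ ∈ (B' * B'ᵀ).charpoly.roots,
      μ₁ ≠ 0 ∧ μ₂ ≠ 0 ∧ μ₁ ≠ μ₂ := by
  classical
  subst hk
  rcases Nat.eq_zero_or_pos q with hq0 | hq
  · subst hq0
    exact absurd (fun i => i.elim0) hnotcover
  set A := B' * B'ᵀ with hAdef
  have hA : A.IsHermitian := by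
    have := Matrix.isHermitian_mul_conjTranspose_self B'
    rwa [Matrix.conjTranspose_eq_transpose_of_trivial] at this
  by_contra hcon
  push_neg at hcon
  -- all nonzero roots are equal: get a common value μ
  obtain ⟨μ, hμ⟩ : ∃ μ : ℝ, ∀ r ∈ A.charpoly.roots, r = 0 ∨ r = μ := by
    by_cases hall : ∀ r ∈ A.charpoly.roots, r = (0 : ℝ)
    · exact ⟨1, fun r hr => Or.inl (hall r hr)⟩
    · push_neg at hall
      obtain ⟨r₀, hr₀m, hr₀⟩ := hall
      refine ⟨r₀, fun r hr => ?_⟩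
      by_cases h0 : r = 0
      · exact Or.inl h0
      · exact Or.inr (hcon r hr r₀ hr₀m h0 hr₀)
  -- every eigenvalue of A is a root of the charpoly, hence 0 or μ
  have heig : ∀ i, hA.eigenvalues i = 0 ∨ hA.eigenvalues i = μ := by
    intro i
    apply hμ
    rw [Polynomial.mem_roots']
    refine ⟨A.charpoly_monic.ne_zero, ?_⟩
    rw [Polynomial.IsRoot, eval_charpoly_aux]
    apply Matrix.exists_mulVec_eq_zero_iff.mp
    refine ⟨⇑(hA.eigenvectorBasis i), ?_, ?_⟩
    · intro h
      exact hA.eigenvectorBasis.orthonormal.ne_zero i (by ext j; exact congrFun h j)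
    · have hmv := hA.mulVec_eigenvectorBasis i
      rw [Matrix.sub_mulVec, hmv]
      funext j
      simp [Matrix.mulVec_diagonal]
  -- spectral theorem gives A * A = μ • A
  have hAA : A * A = μ • A := by
    have hspec := hA.spectral_theorem
    set U : Matrix (Fin (3 * q)) (Fin (3 * q)) ℝ := (hA.eigenvectorUnitary : Matrix (Fin (3 * q)) (Fin (3 * q)) ℝ) with hU
    set D : Matrix (Fin (3 * q)) (Fin (3 * q)) ℝ :=
      Matrix.diagonal (RCLike.ofReal ∘ hA.eigenvalues) with hD
    have hUU : star U * U = 1 := by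
      exact Matrix.UnitaryGroup.star_mul_self hA.eigenvectorUnitary
    have hDD : D * D = μ • D := by
      rw [hD, Matrix.diagonal_mul_diagonal]
      ext i j
      by_cases hij : i = j
      · subst hij
        rcases heig i with h | h <;>
          simp [Matrix.diagonal_apply_eq, Function.comp, h]
      · simp [Matrix.diagonal_apply_ne _ hij]
    calc A * A = U * D * star U * (U * D * star U) := by rw [hspec, Unitary.conjStarAlgAut_apply]
      _ = U * (D * (star U * (U * (D * star U)))) := by simp only [mul_assoc]
      _ = U * (D * (D * star U)) := by
          rw [← mul_assoc (star U) U (D * star U), hUU, one_mul]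
      _ = U * (D * D) * star U := by simp only [mul_assoc]
      _ = U * (μ • D) * star U := by rw [hDD]
      _ = μ • (U * D * star U) := by simp only [Matrix.mul_smul, Matrix.smul_mul]
      _ = μ • A := by rw [hspec, Unitary.conjStarAlgAut_apply]
  -- the Gram matrix G
  set G : Matrix (Fin q) (Fin q) ℝ := B'ᵀ * B' with hG
  have hGAA : G * (G * G) = G * (μ • G) := by
    have h := congrArg (fun M => B'ᵀ * M * B') hAA
    simp only [hAdef, Matrix.mul_smul, Matrix.smul_mul, Matrix.mul_assoc] at h
    simp only [hG, Matrix.mul_smul, Matrix.mul_assoc]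
    exact h
  -- G is invertible
  have hGdet : IsUnit G.det := by
    rw [isUnit_iff_ne_zero]
    intro hdet
    obtain ⟨v, hvne, hv0⟩ := Matrix.exists_mulVec_eq_zero_iff.mpr hdet
    have h2 : star (B' *ᵥ v) ⬝ᵥ (B' *ᵥ v) = 0 := by
      have h1 : star v ⬝ᵥ (G *ᵥ v) = 0 := by rw [hv0, dotProduct_zero]
      rw [hG, ← Matrix.conjTranspose_eq_transpose_of_trivial, ← Matrix.mulVec_mulVec,
        Matrix.dotProduct_mulVec, Matrix.vecMul_conjTranspose, star_star] at h1
      exact h1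
    have h3 : B' *ᵥ v = 0 := dotProduct_star_self_eq_zero.mp h2
    apply hvne
    have hsum : ∑ j, v j • (fun i => B' i j) = (0 : Fin (3 * q) → ℝ) := by
      funext i
      have := congrFun h3 i
      simpa [Matrix.mulVec, dotProduct, mul_comm, Finset.sum_apply] using this
    have := Fintype.linearIndependent_iff.mp hli v hsum
    funext j
    exact this j
  have hGu : IsUnit G := (Matrix.isUnit_iff_isUnit_det G).mpr hGdet
  have hGG : G * G = μ • G := hGu.mul_left_cancel hGAA
  have hGI : G = μ • 1 := by
    apply hGu.mul_left_cancel
    rw [hGG, Matrix.mul_smul, mul_one]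
  -- the diagonal of G is 3, hence μ = 3
  obtain ⟨j0⟩ : Nonempty (Fin q) := ⟨⟨0, hq⟩⟩
  have hdiag : G j0 j0 = 3 := by
    have hterm : ∀ i, B' i j0 * B' i j0 = B' i j0 := by
      intro i; rcases hbin i j0 with h | h <;> simp [h]
    simp only [hG, Matrix.mul_apply, Matrix.transpose_apply]
    rw [Finset.sum_congr rfl fun i _ => hterm i, hcol]
  have hμ3 : μ = 3 := by
    have := congrFun (congrFun hGI j0) j0
    rw [hdiag] at this
    simpa using this.symm
  -- off-diagonal entries of G vanish: columns have disjoint support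
  have hoff : ∀ (i : Fin (3 * q)) (j j' : Fin q), j ≠ j' → B' i j * B' i j' = 0 := by
    intro i j j' hjj'
    have hzero : G j j' = 0 := by
      rw [hGI]; simp [Matrix.one_apply_ne hjj']
    have hsum : ∑ i', B' i' j * B' i' j' = 0 := by
      simpa [hG, Matrix.mul_apply, Matrix.transpose_apply] using hzero
    have hnn : ∀ i' ∈ Finset.univ, (0 : ℝ) ≤ B' i' j * B' i' j' := by
      intro i' _
      apply mul_nonneg
      · rcases hbin i' j with h | h <;> simp [h]
      · rcases hbin i' j' with h | h <;> simp [h]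
    exact (Finset.sum_eq_zero_iff_of_nonneg hnn).mp hsum i (Finset.mem_univ i)
  -- each row sum is 0 or 1
  have hrow : ∀ i, (∑ j, B' i j) = 0 ∨ (∑ j, B' i j) = 1 := by
    intro i
    by_cases hz : ∀ j, B' i j = 0
    · left; simp [hz]
    · right
      push_neg at hz
      obtain ⟨j1, hj1⟩ := hz
      have hj1' : B' i j1 = 1 := (hbin i j1).resolve_left hj1
      rw [Finset.sum_eq_single j1]
      · exact hj1'
      · intro b _ hb
        rcases hbin i b with h | h
        · exact h
        · exfalso
          have h0 := hoff i b j1 hb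
          rw [h, hj1', one_mul] at h0
          exact one_ne_zero h0
      · intro h; exact absurd (Finset.mem_univ _) h
  -- total count argument
  have htot : ∑ i, ∑ j, B' i j = (3 * q : ℝ) := by
    rw [show ∑ i, ∑ j, B' i j = ∑ j, ∑ i, B' i j from Finset.sum_comm]
    rw [Finset.sum_congr rfl fun j _ => hcol j]
    simp [Finset.sum_const, mul_comm]
  push_neg at hnotcover
  obtain ⟨i0, hi0⟩ := hnotcover
  have hi00 : ∑ j, B' i0 j = 0 := (hrow i0).resolve_right hi0
  have hlt : ∑ i, ∑ j, B' i j < ∑ _i : Fin (3 * q), (1 : ℝ) := by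
    apply Finset.sum_lt_sum
    · intro i _
      rcases hrow i with h | h <;> simp [h]
    · exact ⟨i0, Finset.mem_univ _, by rw [hi00]; norm_num⟩
  rw [htot] at hlt
  simp at hlt
end
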